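/- arXiv:2412.07935 — 2 statements merged into one kernel-verified Lean document; each statement's English description precedes it below -/
import Mathlib

section
/- Let x_0, x_1, ..., x_n be a structured random walk on ℝ with linear drift f(x, t) = β(t)·x, i.e. x_{k+1} = x_k + β(t_k)·x_k·Δt + g(t_k)·√Δt·z_k, where x_0 ∈ ℝ is deterministic, t_k = k/n, Δt = 1/n, and z_0, ..., z_{n−1} are independent square-integrable real random variables with E[z_k] = 0 and Var(z_k) = 1, each z_k independent of (x_0, ..., x_k). Then for every k ≤ n, Var(x_k) = ∑_{j=0}^{k−1} ( ∏_{i=j+1}^{k−1} (1 + β(t_i)·Δt)² ) · g(t_j)² · Δt. -/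
open MeasureTheory ProbabilityTheory Finset

/-!
Writing `a_k = 1 + β(t_k) Δt` and `c_k = g(t_k) √Δt`, the walk is the linear recursion
`x_{k+1} = a_k x_k + c_k z_k`. Since `z_k` is independent of `x_k`, variances add:
`Var(x_{k+1}) = a_k² Var(x_k) + g(t_k)² Δt`, and `Var(x_0) = 0`. Unrolling this first-order
linear recurrence gives the stated sum.
-/

lemma eq_sum_prod_of_linear_recurrence {R : Type*} [CommSemiring R] {v r s : ℕ → R} {n : ℕ}
    (h0 : v 0 = 0) (hstep : ∀ k < n, v (k + 1) = r k * v k + s k) :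
    ∀ k ≤ n, v k = ∑ j ∈ range k, (∏ i ∈ Ico (j + 1) k, r i) * s j := by
  intro k
  induction k with
  | zero => simp [h0]
  | succ k ih =>
    intro hk
    rw [hstep k hk, ih (Nat.le_of_succ_le hk), sum_range_succ, Ico_self, prod_empty, one_mul, mul_sum]
    congr 1
    refine sum_congr rfl fun j hj => ?_
    rw [prod_Ico_succ_top (mem_range.mp hj)]
    ring

section LinearStep

variable {Ω : Type*} [MeasurableSpace Ω] {P : Measure Ω}

lemma memLp_of_linear_recursion {p : ENNReal} {x z : ℕ → Ω → ℝ} {a c : ℕ → ℝ} {n : ℕ}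
    (h0 : MemLp (x 0) p P) (hz : ∀ k < n, MemLp (z k) p P)
    (hstep : ∀ k < n, x (k + 1) = fun ω => a k * x k ω + c k * z k ω) :
    ∀ k ≤ n, MemLp (x k) p P := by
  intro k
  induction k with
  | zero => exact fun _ => h0
  | succ k ih =>
    intro hk
    rw [hstep k hk]
    exact ((ih (Nat.le_of_succ_le hk)).const_mul (a k)).add ((hz k hk).const_mul (c k))

lemma variance_linear_combination_of_indepFun {X Z : Ω → ℝ} (a c : ℝ)
    (hX : MemLp X 2 P) (hZ : MemLp Z 2 P) (hXZ : IndepFun X Z P) :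
    variance (fun ω => a * X ω + c * Z ω) P = a ^ 2 * variance X P + c ^ 2 * variance Z P := by
  have hind : IndepFun (fun ω => a * X ω) (fun ω => c * Z ω) P :=
    hXZ.comp (measurable_const_mul a) (measurable_const_mul c)
  rw [show (fun ω => a * X ω + c * Z ω) = (fun ω => a * X ω) + (fun ω => c * Z ω) from rfl,
    hind.variance_add (hX.const_mul a) (hZ.const_mul c), variance_const_mul, variance_const_mul]

lemma indepFun_of_indep_iSup_comap {x : ℕ → Ω → ℝ} {Z : Ω → ℝ} {k : ℕ}
    (h : Indep (⨆ i ≤ k, MeasurableSpace.comap (x i) inferInstance)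
      (MeasurableSpace.comap Z inferInstance) P) :
    IndepFun (x k) Z P :=
  (IndepFun_iff_Indep _ _ _).mpr <| indep_of_indep_of_le_left h <|
    le_iSup₂ (f := fun i (_ : i ≤ k) => MeasurableSpace.comap (x i) inferInstance) k le_rfl

end LinearStep

theorem structured_random_walk_variance_general
    {Ω : Type*} [MeasurableSpace Ω] (P : Measure Ω) [IsProbabilityMeasure P]
    (n : ℕ) (β g : ℝ → ℝ) (x0 : ℝ)
    (x z : ℕ → Ω → ℝ)
    (hx0 : x 0 = fun _ => x0)
    (hrec : ∀ k < n, x (k + 1) = fun ω =>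
      x k ω + β ((k : ℝ) / n) * x k ω * (1 / n)
        + g ((k : ℝ) / n) * Real.sqrt (1 / n) * z k ω)
    (hzL2 : ∀ k < n, MemLp (z k) 2 P)
    (hz_var : ∀ k < n, variance (z k) P = 1)
    (hz_x : ∀ k < n,
      Indep (⨆ i ≤ k, MeasurableSpace.comap (x i) inferInstance)
        (MeasurableSpace.comap (z k) inferInstance) P) :
    ∀ k ≤ n, variance (x k) P
      = ∑ j ∈ Finset.range k,
          (∏ i ∈ Finset.Ico (j + 1) k, (1 + β ((i : ℝ) / n) * (1 / n)) ^ 2)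
            * g ((j : ℝ) / n) ^ 2 * (1 / n) := by
  set a : ℕ → ℝ := fun k => 1 + β ((k : ℝ) / n) * (1 / n)
  set c : ℕ → ℝ := fun k => g ((k : ℝ) / n) * Real.sqrt (1 / n)
  have hstep : ∀ k < n, x (k + 1) = fun ω => a k * x k ω + c k * z k ω := fun k hk => by
    rw [hrec k hk]; ext ω; ring
  have hxL2 := memLp_of_linear_recursion (by rw [hx0]; exact memLp_const x0) hzL2 hstep
  have hvar_step : ∀ k < n, variance (x (k + 1)) P
      = a k ^ 2 * variance (x k) P + g ((k : ℝ) / n) ^ 2 * (1 / n) := fun k hk => by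
    rw [hstep k hk, variance_linear_combination_of_indepFun _ _ (hxL2 k hk.le) (hzL2 k hk)
      (indepFun_of_indep_iSup_comap (hz_x k hk)), hz_var k hk, mul_pow,
      Real.sq_sqrt (by positivity), mul_one]
  intro k hk
  rw [eq_sum_prod_of_linear_recurrence (v := fun k => variance (x k) P)
    (by simp [hx0, variance_eq_sub (memLp_const x0)]) hvar_step k hk]
  simp only [a, mul_assoc]

/-- **Variance of a structured random walk with linear drift.**
For a structured random walk `x_{k+1} = x_k + β(t_k)·x_k·Δt + g(t_k)·√Δt·z_k` on the
uniform grid `t_k = k/n`, `Δt = 1/n`, starting at a deterministic `x₀`, with independent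
square-integrable noises `z_k` of mean 0 and variance 1, each independent of
`(x_0, …, x_k)`, we have
`Var(x_k) = ∑_{j=0}^{k-1} (∏_{i=j+1}^{k-1} (1 + β(t_i)·Δt)²) · g(t_j)² · Δt` for `k ≤ n`. -/
theorem structured_random_walk_variance
    {Ω : Type*} [MeasurableSpace Ω] (P : Measure Ω) [IsProbabilityMeasure P]
    (n : ℕ) (hn : 0 < n) (β g : ℝ → ℝ) (x0 : ℝ)
    (x z : ℕ → Ω → ℝ)
    (hx0 : x 0 = fun _ => x0)
    (hrec : ∀ k < n, x (k + 1) = fun ω =>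
      x k ω + β ((k : ℝ) / n) * x k ω * (1 / n)
        + g ((k : ℝ) / n) * Real.sqrt (1 / n) * z k ω)
    (hz_meas : ∀ k < n, Measurable (z k))
    (hzL2 : ∀ k < n, MemLp (z k) 2 P)
    (hz_mean : ∀ k < n, ∫ ω, z k ω ∂P = 0)
    (hz_var : ∀ k < n, variance (z k) P = 1)
    (hz_indep : iIndepFun (fun i : Fin n => z i) P)
    (hz_x : ∀ k < n,
      Indep (⨆ i ≤ k, MeasurableSpace.comap (x i) inferInstance)
        (MeasurableSpace.comap (z k) inferInstance) P) :
    ∀ k ≤ n, variance (x k) P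
      = ∑ j ∈ Finset.range k,
          (∏ i ∈ Finset.Ico (j + 1) k, (1 + β ((i : ℝ) / n) * (1 / n)) ^ 2)
            * g ((j : ℝ) / n) ^ 2 * (1 / n) :=
  structured_random_walk_variance_general P n β g x0 x z hx0 hrec hzL2 hz_var hz_x
end

section
/- Let p be the density of the Laplace(μ_1, b_1) distribution and q the density of the Laplace(μ_2, b_2) distribution, with b_1, b_2 > 0. Then the cross-entropy satisfies −∫_ℝ p(x)·log q(x) dx = |μ_2 − μ_1|/b_2 + (b_1/b_2)·exp(−|μ_2 − μ_1|/b_1) + log(2·b_2). -/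
/-!
Since `-log q(x) = log (2 b₂) + |x - μ₂| / b₂`, the cross-entropy is `log (2 b₂) + E|X - μ₂| / b₂`
for `X ~ Laplace(μ₁, b₁)`. After centring, the mean absolute deviation of `Laplace(0, b)` about a
point `t ≥ 0` is computed from `|x - t| = (t - x) + 2 (x - t)⁺`: the first term has mean `t` by
symmetry, and the second only sees the tail `x > t`, where the density is a plain exponential,
giving `t + b e^{-t/b}`.
-/

open MeasureTheory Real Set

lemma integral_exp_neg_div_Ioi_zero {b : ℝ} (hb : 0 < b) :
    ∫ x in Ioi 0, exp (-x / b) = b := by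
  have h := integral_exp_mul_Ioi (a := -b⁻¹) (by simpa using hb) 0
  simp only [mul_zero, exp_zero] at h
  simpa [div_eq_inv_mul] using h

lemma integral_mul_exp_neg_div_Ioi_zero {b : ℝ} (hb : 0 < b) :
    ∫ x in Ioi 0, x * exp (-x / b) = b ^ 2 := by
  have h := integral_rpow_mul_exp_neg_mul_Ioi two_pos (inv_pos.mpr hb)
  norm_num [Gamma_two] at h
  simpa [div_eq_inv_mul, neg_div, mul_comm] using h

lemma integral_exp_neg_abs_div {b : ℝ} (hb : 0 < b) : ∫ x, exp (-|x| / b) = 2 * b := by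
  rw [integral_comp_abs (f := fun x => exp (-x / b)), integral_exp_neg_div_Ioi_zero hb]

lemma integral_abs_mul_exp_neg_abs_div {b : ℝ} (hb : 0 < b) :
    ∫ x, |x| * exp (-|x| / b) = 2 * b ^ 2 := by
  rw [integral_comp_abs (f := fun x => x * exp (-x / b)), integral_mul_exp_neg_div_Ioi_zero hb]

-- `integral_comp_abs` needs no integrability, so the nonzero values above force it.
lemma integrable_exp_neg_abs_div {b : ℝ} (hb : 0 < b) : Integrable fun x => exp (-|x| / b) :=
  .of_integral_ne_zero (by rw [integral_exp_neg_abs_div hb]; positivity)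

lemma integrable_abs_mul_exp_neg_abs_div {b : ℝ} (hb : 0 < b) :
    Integrable fun x => |x| * exp (-|x| / b) :=
  .of_integral_ne_zero (by rw [integral_abs_mul_exp_neg_abs_div hb]; positivity)

lemma integral_mul_exp_neg_abs_div (b : ℝ) : ∫ x, x * exp (-|x| / b) = 0 := by
  have h := integral_neg_eq_self (fun x => x * exp (-|x| / b)) volume
  simp only [abs_neg, neg_mul, integral_neg] at h
  linarith

lemma integral_Ioi_sub_mul_exp_neg_div {b : ℝ} (hb : 0 < b) (c : ℝ) :
    ∫ x in Ioi c, (x - c) * exp (-x / b) = b ^ 2 * exp (-c / b) := by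
  have h := (measurePreserving_add_right volume c).setIntegral_preimage_emb
    (measurableEmbedding_addRight c) (fun x => (x - c) * exp (-x / b)) (Ioi c)
  rw [← h]
  have hsplit (x : ℝ) : x * exp (-(x + c) / b) = exp (-c / b) * (x * exp (-x / b)) := by
    rw [mul_left_comm, ← exp_add]
    ring_nf
  simp only [preimage_add_const_Ioi, sub_self, add_sub_cancel_right, hsplit, integral_const_mul,
    integral_mul_exp_neg_div_Ioi_zero hb]
  ring

lemma integral_max_sub_zero_mul_exp_neg_abs_div {b t : ℝ} (hb : 0 < b) (ht : 0 ≤ t) :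
    ∫ x, max (x - t) 0 * exp (-|x| / b) = b ^ 2 * exp (-t / b) := by
  rw [← setIntegral_eq_integral_of_forall_compl_eq_zero (s := Ioi t) fun x hx => by
    simp [show x ≤ t from not_lt.mp hx], ← integral_Ioi_sub_mul_exp_neg_div hb t]
  refine setIntegral_congr_fun measurableSet_Ioi fun x (hx : t < x) => ?_
  rw [max_eq_left (by linarith), abs_of_pos (by linarith)]

lemma integral_abs_sub_mul_exp_neg_abs_div_of_nonneg {b t : ℝ} (hb : 0 < b) (ht : 0 ≤ t) :
    ∫ x, |x - t| * exp (-|x| / b) = 2 * b * (t + b * exp (-t / b)) := by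
  have hE := integrable_exp_neg_abs_div hb
  have hA := integrable_abs_mul_exp_neg_abs_div hb
  have hX : Integrable fun x => x * exp (-|x| / b) :=
    hA.mono' (by fun_prop) (.of_forall fun x => by simp)
  have hM : Integrable fun x => max (x - t) 0 * exp (-|x| / b) :=
    hA.mono' (by fun_prop) (.of_forall fun x => by
      rw [norm_mul, norm_of_nonneg (exp_pos _).le, norm_of_nonneg (le_max_right _ _)]
      gcongr
      exact max_le (by linarith [le_abs_self x]) (abs_nonneg x))
  have hsplit (x : ℝ) : |x - t| * exp (-|x| / b) =
      t * exp (-|x| / b) - x * exp (-|x| / b) + 2 * (max (x - t) 0 * exp (-|x| / b)) := by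
    rcases le_total x t with h | h
    · rw [abs_of_nonpos (by linarith), max_eq_right (by linarith)]; ring
    · rw [abs_of_nonneg (by linarith), max_eq_left (by linarith)]; ring
  simp_rw [hsplit]
  have hT : Integrable fun x => t * exp (-|x| / b) - x * exp (-|x| / b) := (hE.const_mul t).sub hX
  rw [integral_add hT (hM.const_mul 2), integral_sub (hE.const_mul t) hX,
    integral_const_mul, integral_const_mul, integral_exp_neg_abs_div hb,
    integral_mul_exp_neg_abs_div, integral_max_sub_zero_mul_exp_neg_abs_div hb ht]
  ring

lemma integrable_abs_sub_mul_exp_neg_abs_div {b : ℝ} (hb : 0 < b) (a : ℝ) :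
    Integrable fun x => |x - a| * exp (-|x| / b) := by
  refine ((integrable_abs_mul_exp_neg_abs_div hb).add
    ((integrable_exp_neg_abs_div hb).const_mul |a|)).mono' (by fun_prop) (.of_forall fun x => ?_)
  rw [norm_mul, norm_of_nonneg (abs_nonneg _), norm_of_nonneg (exp_pos _).le, Pi.add_apply,
    ← add_mul]
  gcongr
  exact abs_sub _ _

lemma integral_abs_sub_mul_exp_neg_abs_div {b : ℝ} (hb : 0 < b) (a : ℝ) :
    ∫ x, |x - a| * exp (-|x| / b) = 2 * b * (|a| + b * exp (-|a| / b)) := by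
  rcases le_total 0 a with ha | ha
  · rw [abs_of_nonneg ha, integral_abs_sub_mul_exp_neg_abs_div_of_nonneg hb ha]
  · rw [abs_of_nonpos ha, ← integral_abs_sub_mul_exp_neg_abs_div_of_nonneg hb (neg_nonneg.mpr ha),
      ← integral_neg_eq_self]
    congr with x
    rw [abs_neg, ← abs_neg (-x - a)]
    ring_nf

noncomputable def laplacePDFReal (μ b x : ℝ) : ℝ := 1 / (2 * b) * exp (-|x - μ| / b)

lemma log_laplacePDFReal {b : ℝ} (hb : b ≠ 0) (μ x : ℝ) :
    log (laplacePDFReal μ b x) = -(log (2 * b) + |x - μ| / b) := by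
  rw [laplacePDFReal, log_mul (by simpa using hb) (exp_ne_zero _), log_exp, one_div, log_inv]
  ring

lemma integrable_laplacePDFReal {b : ℝ} (hb : 0 < b) (μ : ℝ) : Integrable (laplacePDFReal μ b) :=
  ((integrable_exp_neg_abs_div hb).comp_sub_right μ).const_mul _

lemma integral_laplacePDFReal {b : ℝ} (hb : 0 < b) (μ : ℝ) : ∫ x, laplacePDFReal μ b x = 1 := by
  unfold laplacePDFReal
  rw [integral_const_mul, integral_sub_right_eq_self (fun x => exp (-|x| / b)) μ,
    integral_exp_neg_abs_div hb]
  field_simp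

lemma laplacePDFReal_mul_abs_sub (μ b m : ℝ) :
    (fun x => laplacePDFReal μ b x * |x - m|) =
      fun x => 1 / (2 * b) * (|x - μ - (m - μ)| * exp (-|x - μ| / b)) := by
  ext x
  rw [laplacePDFReal, sub_sub_sub_cancel_right]
  ring

lemma integrable_laplacePDFReal_mul_abs_sub {b : ℝ} (hb : 0 < b) (μ m : ℝ) :
    Integrable fun x => laplacePDFReal μ b x * |x - m| := by
  rw [laplacePDFReal_mul_abs_sub]
  exact ((integrable_abs_sub_mul_exp_neg_abs_div hb _).comp_sub_right μ).const_mul _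

lemma integral_laplacePDFReal_mul_abs_sub {b : ℝ} (hb : 0 < b) (μ m : ℝ) :
    ∫ x, laplacePDFReal μ b x * |x - m| = |m - μ| + b * exp (-|m - μ| / b) := by
  rw [laplacePDFReal_mul_abs_sub, integral_const_mul,
    integral_sub_right_eq_self (fun x => |x - (m - μ)| * exp (-|x| / b)) μ,
    integral_abs_sub_mul_exp_neg_abs_div hb]
  field_simp

/-- **Cross-entropy between two Laplace distributions.**
For `b₁, b₂ > 0`, with `p` the density of `Laplace(μ₁, b₁)` and `q` the density of
`Laplace(μ₂, b₂)`,
`−∫ p(x)·log q(x) dx = |μ₂ − μ₁|/b₂ + (b₁/b₂)·exp(−|μ₂ − μ₁|/b₁) + log(2b₂)`. -/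
theorem laplace_laplace_cross_entropy (μ₁ μ₂ b₁ b₂ : ℝ) (hb₁ : 0 < b₁) (hb₂ : 0 < b₂) :
    -∫ x : ℝ, (1 / (2 * b₁) * Real.exp (-|x - μ₁| / b₁))
        * Real.log (1 / (2 * b₂) * Real.exp (-|x - μ₂| / b₂))
      = |μ₂ - μ₁| / b₂ + b₁ / b₂ * Real.exp (-|μ₂ - μ₁| / b₁) + Real.log (2 * b₂) := by
  change -∫ x, laplacePDFReal μ₁ b₁ x * log (laplacePDFReal μ₂ b₂ x) = _
  have hlog (x : ℝ) : laplacePDFReal μ₁ b₁ x * log (laplacePDFReal μ₂ b₂ x) =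
      -(log (2 * b₂) * laplacePDFReal μ₁ b₁ x + laplacePDFReal μ₁ b₁ x * |x - μ₂| / b₂) := by
    rw [log_laplacePDFReal hb₂.ne']
    ring
  simp_rw [hlog]
  rw [integral_neg, neg_neg, integral_add ((integrable_laplacePDFReal hb₁ μ₁).const_mul _)
      ((integrable_laplacePDFReal_mul_abs_sub hb₁ μ₁ μ₂).div_const _),
    integral_const_mul, integral_div, integral_laplacePDFReal hb₁,
    integral_laplacePDFReal_mul_abs_sub hb₁]
  field_simp
  ring
end
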